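/- Let c > 0 be a real number with c < 1, and let d be a real number satisfying 2(1−c)ln(1−c) + 2c·ln(c) + c²d ≥ 0. Then in the binomial random bipartite graph G(N, N, d/N), asymptotically almost surely every pair of sets S, T with S in one color class, T in the other, and |S| = |T| = cN, satisfies e(S,T) ≥ 1. -/

import Mathlib

/-!
Union bound: the probability that some pair `S, T` of size `k = ⌊cN⌋` spans no edge is at most
`C(N, k)² (1 - d/N)^(k²)`. Stirling's formula with explicit constants gives
`C(N, k) ≤ O(N^(-1/2)) · exp(N H(k/N))`, Gibbs' inequality bounds `N H(k/N)` by the cross entropy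
`-(k log c + (N - k) log (1 - c)) = N H(c) + O(1)`, and `(1 - d/N)^(k²) ≤ exp(-c² d N + O(1))`.
The hypothesis says `2 H(c) ≤ c² d`, so the exponents cancel up to `O(1)` and the bound is
`O(1/N)`; the factor `N^(-1/2)` of Stirling's formula is what handles the case of equality.
-/

open MeasureTheory

/-- The binomial random bipartite graph `G(N, N, p)`: each pair in `Fin N × Fin N` (left vertex,
right vertex) is an edge independently with probability `p` (truncated at `1`). A sample is the
indicator function of the edge set. -/
noncomputable def randomBipartite (N : ℕ) (p : ℝ) : Measure (Fin N × Fin N → Bool) :=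
  Measure.pi fun _ =>
    (PMF.bernoulli (min (Real.toNNReal p) 1) (min_le_right _ _)).toMeasure

open Filter Finset Real Topology
open scoped Nat

instance (N : ℕ) (p : ℝ) : IsProbabilityMeasure (randomBipartite N p) := by
  rw [randomBipartite]; infer_instance

theorem randomBipartite_noEdges {N : ℕ} {p : ℝ} (hp0 : 0 ≤ p) (hp1 : p ≤ 1)
    (S T : Finset (Fin N)) :
    randomBipartite N p {f | ∀ s ∈ S, ∀ t ∈ T, f (s, t) = false}
      = ENNReal.ofReal ((1 - p) ^ (#S * #T)) := by
  classical
  have hset : {f : Fin N × Fin N → Bool | ∀ s ∈ S, ∀ t ∈ T, f (s, t) = false}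
      = Set.univ.pi fun i => if i ∈ S ×ˢ T then {false} else Set.univ := by
    ext f
    simp only [Set.mem_ofPred_eq, Set.mem_univ_pi, mem_product]
    exact ⟨fun h i => by split_ifs with hi; exacts [h _ hi.1 _ hi.2, trivial],
      fun h s hs t ht => by simpa [hs, ht] using h (s, t)⟩
  have hbern : (PMF.bernoulli (min (Real.toNNReal p) 1) (min_le_right _ _)).toMeasure {false}
      = ENNReal.ofReal (1 - p) := by
    rw [PMF.toMeasure_apply_singleton _ _ (measurableSet_singleton _), PMF.bernoulli_apply,
      min_eq_left (Real.toNNReal_le_one.2 hp1), ENNReal.ofReal_sub _ hp0, ENNReal.ofReal_one]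
    rfl
  rw [hset, randomBipartite, Measure.pi_pi]
  simp only [apply_ite, hbern, measure_univ]
  rw [Finset.prod_ite_mem, univ_inter, prod_const, card_product,
    ENNReal.ofReal_pow (by linarith)]

theorem randomBipartite_compl_le {N : ℕ} {p : ℝ} (hp0 : 0 ≤ p) (hp1 : p ≤ 1) (k : ℕ) :
    randomBipartite N p {f | ∀ S T : Finset (Fin N), #S = k → #T = k →
        ∃ s ∈ S, ∃ t ∈ T, f (s, t) = true}ᶜ
      ≤ ENNReal.ofReal ((N.choose k : ℝ) ^ 2 * (1 - p) ^ (k * k)) := by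
  let K := powersetCard k (univ : Finset (Fin N))
  have hsub : {f : Fin N × Fin N → Bool | ∀ S T : Finset (Fin N), #S = k → #T = k →
        ∃ s ∈ S, ∃ t ∈ T, f (s, t) = true}ᶜ
      ⊆ ⋃ S ∈ K, ⋃ T ∈ K, {f | ∀ s ∈ S, ∀ t ∈ T, f (s, t) = false} := by
    intro f hf
    simp only [Set.mem_compl_iff, Set.mem_ofPred_eq, not_forall, not_exists, not_and,
      Bool.not_eq_true] at hf
    obtain ⟨S, T, hS, hT, hno⟩ := hf
    simp only [Set.mem_iUnion]
    exact ⟨S, by simp [K, hS], T, by simp [K, hT], hno⟩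
  calc _ ≤ ∑ S ∈ K, ∑ T ∈ K, randomBipartite N p {f | ∀ s ∈ S, ∀ t ∈ T, f (s, t) = false} :=
        (measure_mono hsub).trans <| (measure_biUnion_finset_le _ _).trans <|
          sum_le_sum fun _ _ => measure_biUnion_finset_le _ _
    _ = ∑ S ∈ K, ∑ T ∈ K, ENNReal.ofReal ((1 - p) ^ (k * k)) := by
        refine sum_congr rfl fun S hS => sum_congr rfl fun T hT => ?_
        rw [randomBipartite_noEdges hp0 hp1, (mem_powersetCard.1 hS).2, (mem_powersetCard.1 hT).2]
    _ = _ := by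
        simp only [sum_const, K, card_powersetCard, card_univ, Fintype.card_fin, nsmul_eq_mul]
        rw [ENNReal.ofReal_mul (by positivity), ENNReal.ofReal_pow (Nat.cast_nonneg _),
          ENNReal.ofReal_natCast, ENNReal.ofReal_pow (by linarith)]
        ring

theorem Stirling.factorial_le_exp_one_mul_sqrt_mul {n : ℕ} (hn : n ≠ 0) :
    (n ! : ℝ) ≤ exp 1 * √n * (n / exp 1) ^ n := by
  obtain ⟨m, rfl⟩ := Nat.exists_eq_succ_of_ne_zero hn
  have h : stirlingSeq (m + 1) ≤ exp 1 / √2 := by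
    simpa using Stirling.stirlingSeq'_antitone (Nat.zero_le m)
  rw [stirlingSeq, div_le_iff₀ (by positivity)] at h
  calc ((m + 1) ! : ℝ) ≤ exp 1 / √2 * (√(2 * ↑(m + 1)) * (↑(m + 1) / exp 1) ^ (m + 1)) := h
    _ = _ := by rw [sqrt_mul zero_le_two]; field_simp

theorem div_exp_one_pow_eq_exp (x : ℝ) (hx : 0 < x) (n : ℕ) : (x / exp 1) ^ n = exp (n * (log x - 1)) := by
  rw [exp_nat_mul, exp_sub, exp_log hx]

theorem choose_add_le_sqrt_mul_exp {k s : ℕ} (hk : k ≠ 0) (hs : s ≠ 0) :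
    ((k + s).choose k : ℝ) ≤ exp 1 / (2 * π) * √((k + s) / (k * s))
      * exp ((k + s) * log (k + s) - k * log k - s * log s) := by
  have hk0 : (0 : ℝ) < k := by positivity
  have hs0 : (0 : ℝ) < s := by positivity
  rw [Nat.cast_choose ℝ (Nat.le_add_right k s), Nat.add_sub_cancel_left]
  calc ((k + s) ! : ℝ) / (k ! * s !)
      ≤ exp 1 * √(k + s : ℕ) * ((k + s : ℕ) / exp 1) ^ (k + s)
        / (√(2 * π * k) * (k / exp 1) ^ k * (√(2 * π * s) * (s / exp 1) ^ s)) :=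
        div_le_div₀ (by positivity) (Stirling.factorial_le_exp_one_mul_sqrt_mul (by omega))
          (by positivity) (mul_le_mul (Stirling.le_factorial_stirling k)
            (Stirling.le_factorial_stirling s) (by positivity) (by positivity))
    _ = _ := by
      push_cast
      rw [div_exp_one_pow_eq_exp _ hk0, div_exp_one_pow_eq_exp _ hs0, div_exp_one_pow_eq_exp _ (by positivity),
        sqrt_div' _ (by positivity), sqrt_mul hk0.le, sqrt_mul' _ hk0.le, sqrt_mul' _ hs0.le]
      have hπ : √(2 * π) ^ 2 = 2 * π := sq_sqrt (by positivity)
      have hexp : exp ((k + s) * log (k + s) - k * log k - s * log s) * exp (k * (log k - 1))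
          * exp (s * (log s - 1)) = exp ((k + s : ℕ) * (log (k + s) - 1)) := by
        rw [← exp_add, ← exp_add]; push_cast; ring_nf
      field_simp
      rw [← hexp, hπ]
      ring

theorem nonneg_of_two_mul_entropy_add_sq_mul_nonneg {c d : ℝ} (hc : 0 < c) (hc1 : c < 1)
    (hd : 2 * (1 - c) * log (1 - c) + 2 * c * log c + c ^ 2 * d ≥ 0) : 0 ≤ d := by
  have h1 : (1 - c) * log (1 - c) < 0 :=
    mul_neg_of_pos_of_neg (by linarith) (log_neg (by linarith) (by linarith))
  have h2 : c * log c < 0 := mul_neg_of_pos_of_neg hc (log_neg hc hc1)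
  nlinarith [pow_pos hc 2]

/-- Gibbs' inequality for the distributions `(a, b) / (a + b)` and `(c, 1 - c)`. -/
theorem add_mul_log_add_sub_le {a b c : ℝ} (ha : 0 < a) (hb : 0 < b) (hc : 0 < c) (hc1 : c < 1) :
    (a + b) * log (a + b) - a * log a - b * log b ≤ -(a * log c + b * log (1 - c)) := by
  have gibbs : ∀ {x y : ℝ}, 0 < x → 0 < y → x * log (y / x) ≤ y - x := fun hx hy => by
    have := log_le_sub_one_of_pos (div_pos hy hx)
    rwa [← mul_le_mul_iff_of_pos_left hx, mul_sub, mul_div_cancel₀ _ hx.ne', mul_one] at this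
  have hab : 0 < a + b := by positivity
  have h1 := gibbs ha (mul_pos hc hab)
  have h2 := gibbs hb (mul_pos (sub_pos.2 hc1) hab)
  rw [log_div (by positivity) ha.ne', log_mul hc.ne' hab.ne'] at h1
  rw [log_div (by positivity) hb.ne', log_mul (by linarith) hab.ne'] at h2
  linarith

theorem neg_two_mul_crossEntropy_sub_le {c d N k : ℝ} (hc : 0 < c) (hc1 : c < 1)
    (hd : 2 * (1 - c) * log (1 - c) + 2 * c * log c + c ^ 2 * d ≥ 0)
    (hN : 0 < N) (hk0 : 0 ≤ k) (hk1 : c * N - 1 ≤ k) (hk2 : k ≤ c * N) :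
    -2 * (k * log c + (N - k) * log (1 - c)) - d * k ^ 2 / N ≤ 2 * d * c - 2 * log (1 - c) := by
  have hd0 := nonneg_of_two_mul_entropy_add_sq_mul_nonneg hc hc1 hd
  have hlogc : log c < 0 := log_neg hc hc1
  have hlogc1 : log (1 - c) < 0 := log_neg (by linarith) (by linarith)
  have hsq : c ^ 2 * N ^ 2 - 2 * c * N ≤ k ^ 2 := by nlinarith
  have hquad : d * c ^ 2 * N - 2 * d * c ≤ d * k ^ 2 / N := by
    rw [le_div_iff₀ hN]; nlinarith [mul_le_mul_of_nonneg_left hsq hd0]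
  nlinarith [mul_nonneg hd hN.le, mul_nonneg (sub_nonneg.2 hk2) (neg_nonneg.2 hlogc.le)]

theorem choose_sq_mul_one_sub_pow_le {c d : ℝ} (hc : 0 < c) (hc1 : c < 1)
    (hd : 2 * (1 - c) * log (1 - c) + 2 * c * log c + c ^ 2 * d ≥ 0)
    {N : ℕ} (hcN : 2 ≤ c * N) (hdN : d / N ≤ 1) :
    (N.choose ⌊c * N⌋₊ : ℝ) ^ 2 * (1 - d / N) ^ (⌊c * N⌋₊ * ⌊c * N⌋₊)
      ≤ (exp 1 / (2 * π)) ^ 2 * (2 / (c * (1 - c))) * exp (2 * d * c - 2 * log (1 - c)) / N := by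
  set k := ⌊c * N⌋₊
  have hN : (0 : ℝ) < N := by nlinarith
  have hk_le : (k : ℝ) ≤ c * N := Nat.floor_le (by positivity)
  have hk_gt : c * N - 1 < k := Nat.sub_one_lt_floor _
  have hk0 : 0 < k := Nat.floor_pos.2 (by linarith)
  have hkN : k < N := by exact_mod_cast hk_le.trans_lt (by nlinarith : c * N < N)
  have hs : (((N - k : ℕ)) : ℝ) = N - k := Nat.cast_sub hkN.le
  have hNk : (0 : ℝ) < N - k := by rw [← hs]; exact Nat.cast_pos.2 (Nat.sub_pos_of_lt hkN)
  set X := k * log c + (N - k) * log (1 - c)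
  have hchoose : (N.choose k : ℝ) ≤ exp 1 / (2 * π) * √(N / (k * (N - k))) * exp (-X) := by
    have h := choose_add_le_sqrt_mul_exp hk0.ne' (Nat.sub_ne_zero_of_lt hkN)
    rw [Nat.add_sub_cancel' hkN.le, hs, add_sub_cancel] at h
    have hgibbs := add_mul_log_add_sub_le (Nat.cast_pos.2 hk0) hNk hc hc1
    rw [add_sub_cancel] at hgibbs
    exact h.trans (by gcongr)
  have h1d : 0 ≤ 1 - d / N := sub_nonneg.2 hdN
  have hpow : (1 - d / N) ^ (k * k) ≤ exp (-(d * k ^ 2 / N)) := by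
    calc (1 - d / N) ^ (k * k) ≤ exp (-(d / N)) ^ (k * k) := by
          gcongr
          linarith [add_one_le_exp (-(d / N))]
      _ = _ := by rw [← exp_nat_mul]; push_cast; ring_nf
  have hratio : (N : ℝ) / (k * (N - k)) ≤ 2 / (c * (1 - c)) / N := by
    rw [div_le_div_iff₀ (by nlinarith) hN, div_mul_eq_mul_div, le_div_iff₀ (by nlinarith)]
    nlinarith
  have hexp := neg_two_mul_crossEntropy_sub_le hc hc1 hd hN k.cast_nonneg hk_gt.le hk_le
  calc (N.choose k : ℝ) ^ 2 * (1 - d / N) ^ (k * k)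
      ≤ (exp 1 / (2 * π) * √(N / (k * (N - k))) * exp (-X)) ^ 2 * exp (-(d * k ^ 2 / N)) := by
        gcongr
    _ = (exp 1 / (2 * π)) ^ 2 * (N / (k * (N - k))) * exp (-2 * X - d * k ^ 2 / N) := by
        have hsplit : exp (-2 * X - d * k ^ 2 / N) = exp (-X) ^ 2 * exp (-(d * k ^ 2 / N)) := by
          rw [sub_eq_add_neg, exp_add, ← exp_nat_mul]; ring_nf
        rw [hsplit, mul_pow, mul_pow, sq_sqrt (by positivity : (0 : ℝ) ≤ N / (k * (N - k)))]
        ring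
    _ ≤ (exp 1 / (2 * π)) ^ 2 * (2 / (c * (1 - c)) / N) * exp (2 * d * c - 2 * log (1 - c)) := by
        gcongr
    _ = _ := by ring

theorem tendsto_choose_sq_mul_one_sub_pow {c d : ℝ} (hc : 0 < c) (hc1 : c < 1)
    (hd : 2 * (1 - c) * log (1 - c) + 2 * c * log c + c ^ 2 * d ≥ 0) :
    Tendsto (fun N : ℕ => (N.choose ⌊c * N⌋₊ : ℝ) ^ 2 * (1 - d / N) ^ (⌊c * N⌋₊ * ⌊c * N⌋₊))
      atTop (𝓝 0) := by
  have hlarge : ∀ᶠ N : ℕ in atTop, 2 ≤ c * N ∧ d / N ≤ 1 := by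
    filter_upwards [tendsto_natCast_atTop_atTop.eventually_ge_atTop (2 / c),
      ((tendsto_const_div_atTop_nhds_zero_nat d).eventually_lt_const one_pos)] with N hN hdN
    exact ⟨by rwa [div_le_iff₀' hc] at hN, hdN.le⟩
  refine squeeze_zero' ?_ ?_ (tendsto_const_div_atTop_nhds_zero_nat
    ((exp 1 / (2 * π)) ^ 2 * (2 / (c * (1 - c))) * exp (2 * d * c - 2 * log (1 - c))))
  · filter_upwards [hlarge] with N hN
    exact mul_nonneg (sq_nonneg _) (pow_nonneg (sub_nonneg.2 hN.2) _)
  · filter_upwards [hlarge] with N hN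
    exact choose_sq_mul_one_sub_pow_le hc hc1 hd hN.1 hN.2

theorem stmt_12 (c d : ℝ) (hc : 0 < c) (hc1 : c < 1)
    (hd : 2 * (1 - c) * Real.log (1 - c) + 2 * c * Real.log c + c ^ 2 * d ≥ 0) :
    Filter.Tendsto
      (fun N : ℕ => randomBipartite N (d / N)
        {f | ∀ S T : Finset (Fin N), S.card = ⌊c * N⌋₊ → T.card = ⌊c * N⌋₊ →
          ∃ s ∈ S, ∃ t ∈ T, f (s, t) = true})
      Filter.atTop (nhds 1) := by
  have hd0 := nonneg_of_two_mul_entropy_add_sq_mul_nonneg hc hc1 hd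
  have hfail := ENNReal.tendsto_ofReal (tendsto_choose_sq_mul_one_sub_pow hc hc1 hd)
  rw [ENNReal.ofReal_zero] at hfail
  have hlower := ENNReal.Tendsto.sub tendsto_const_nhds hfail (Or.inl ENNReal.one_ne_top)
  rw [tsub_zero] at hlower
  refine tendsto_of_tendsto_of_tendsto_of_le_of_le' (h := fun _ => 1) hlower
    tendsto_const_nhds ?_ (Eventually.of_forall fun _ => prob_le_one)
  filter_upwards [(tendsto_const_div_atTop_nhds_zero_nat d).eventually_lt_const one_pos]
    with N hdN
  rw [← compl_compl {f | _}, prob_compl_eq_one_sub (Set.to_countable _).measurableSet]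
  exact tsub_le_tsub_left (randomBipartite_compl_le (by positivity) hdN.le _) 1
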